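/- Let f ∈ F_{μ,L}(ℝ^n) with 0 < μ < L, x* a global minimizer, f* = f(x*), and 0 ≤ ε < 1. Suppose x₁ = x₀ - γd₀ where d₀ satisfies ‖-∇f(x₀) - d₀‖ ≤ ε‖∇f(x₀)‖ and γ minimizes γ ↦ f(x₀ - γd₀) over ℝ. Then f(x₁) - f* ≤ ((1-κ_ε)/(1+κ_ε))²(f(x₀) - f*), where κ_ε = (μ/L)·(1-ε)/(1+ε). -/

import Mathlib

/-!
Every function in `F_{μ,L}` satisfies the Taylor–Hendrickx–Glineur interpolation inequality
between any two of its points. Apply it to the three pairs among `x₀`, `x₁`, `x*` (where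
`∇f(x*) = 0`), and add the two facts the step provides: exact line search makes `∇f(x₁)`
orthogonal to `d₀`, hence to `x₁ - x₀`, and the relative error bound on `d₀` then gives
`⟪∇f(x₀), ∇f(x₁)⟫ ≤ ε ‖∇f(x₀)‖ ‖∇f(x₁)‖`. A fixed nonnegative combination of these inequalities
and of three squares is exactly the claimed contraction of `f - f*`; this is the dual certificate
of the performance-estimation problem of de Klerk, Glineur and Taylor.
-/

def SmoothStronglyConvex {n : ℕ} (μ L : ℝ) (f : EuclideanSpace ℝ (Fin n) → ℝ) : Prop :=
  ContDiff ℝ 1 f ∧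
  ConvexOn ℝ Set.univ (fun x => f x - μ / 2 * ‖x‖ ^ 2) ∧
  ∀ x y : EuclideanSpace ℝ (Fin n), ‖gradient f x - gradient f y‖ ≤ L * ‖x - y‖

open Set RealInnerProductSpace
open scoped Gradient

variable {E : Type*} [NormedAddCommGroup E] [InnerProductSpace ℝ E]

theorem ConvexOn.add_le_of_hasFDerivAt {g : E → ℝ} {g' : E →L[ℝ] ℝ} {x : E}
    (hg : ConvexOn ℝ univ g) (hx : HasFDerivAt g g' x) (y : E) : g x + g' (y - x) ≤ g y := by
  have hderiv : HasDerivAt (g ∘ (AffineMap.lineMap x y : ℝ →ᵃ[ℝ] E)) (g' (y - x)) 0 :=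
    hx.comp_hasDerivAt_of_eq 0 AffineMap.hasDerivAt_lineMap (by simp)
  have hslope := (hg.comp_affineMap (AffineMap.lineMap x y)).le_slope_of_hasDerivAt
    (mem_univ 0) (mem_univ 1) zero_lt_one hderiv
  simp only [slope_def_field, Function.comp_apply, AffineMap.lineMap_apply_zero,
    AffineMap.lineMap_apply_one, sub_zero, div_one] at hslope
  linarith

theorem inner_le_of_norm_neg_sub_le {g d h : E} {ε : ℝ} (hd : ‖-g - d‖ ≤ ε * ‖g‖)
    (hdh : ⟪d, h⟫ = 0) :
    ⟪g, h⟫ ≤ ε * (‖g‖ * ‖h‖) :=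
  calc ⟪g, h⟫ = ⟪g + d, h⟫ := by rw [inner_add_left, hdh, add_zero]
    _ ≤ ‖g + d‖ * ‖h‖ := real_inner_le_norm _ _
    _ ≤ ε * ‖g‖ * ‖h‖ := by
      gcongr
      rwa [← norm_neg, neg_add']
    _ = ε * (‖g‖ * ‖h‖) := mul_assoc _ _ _

-- The Taylor–Hendrickx–Glineur interpolation inequality for `F_{μ,L}`.
def InterpolationIneq (μ L : ℝ) (a : E) (fa : ℝ) (ga : E) (b : E) (fb : ℝ) (gb : E) : Prop :=
  ‖gb - ga - μ • (b - a)‖ ^ 2 ≤ (L - μ) * (2 * (fb - fa - ⟪ga, b - a⟫) - μ * ‖b - a‖ ^ 2)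

theorem contraction_of_interpolationIneq {μ L ε : ℝ} {x₀ x₁ xs g₀ g₁ : E} {f₀ f₁ fs : ℝ}
    (hμ : 0 < μ) (hμL : μ < L) (hε0 : 0 ≤ ε) (hε1 : ε < 1)
    (h0s : InterpolationIneq μ L x₀ f₀ g₀ xs fs 0) (h1s : InterpolationIneq μ L x₁ f₁ g₁ xs fs 0)
    (h10 : InterpolationIneq μ L x₁ f₁ g₁ x₀ f₀ g₀)
    (horth : ⟪g₁, x₁ - x₀⟫ = 0) (hnoise : ⟪g₀, g₁⟫ ≤ ε * (‖g₀‖ * ‖g₁‖)) :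
    f₁ - fs ≤ ((1 - μ / L * ((1 - ε) / (1 + ε))) / (1 + μ / L * ((1 - ε) / (1 + ε)))) ^ 2 *
      (f₀ - fs) := by
  have hL : 0 < L := hμ.trans hμL
  have hLμ : 0 < L - μ := sub_pos.2 hμL
  have h1ε : 0 < 1 - ε := sub_pos.2 hε1
  have hrate : (1 - μ / L * ((1 - ε) / (1 + ε))) / (1 + μ / L * ((1 - ε) / (1 + ε)))
      = (L * (1 + ε) - μ * (1 - ε)) / (L * (1 + ε) + μ * (1 - ε)) := by
    field_simp
  set N := L * (1 + ε) - μ * (1 - ε)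
  set D := L * (1 + ε) + μ * (1 - ε)
  have hN : 0 < N := by nlinarith
  have hD : 0 < D := by positivity
  -- The dual certificate of the one-step performance-estimation problem: the multipliers in
  -- `key`, and the three squares below as its positive semidefinite part.
  have hW₁ := sq_nonneg ‖(D * L) • (x₁ - xs) - (N * L) • (x₀ - xs) - D • g₁ + N • g₀‖
  have hW₂ := sq_nonneg ‖(2 * μ * L * N) • (x₀ - xs) - ((L - μ) * D) • g₁ - ((L + μ) * N) • g₀‖
  have hcs := sq_nonneg (N * ‖g₀‖ - D * ‖g₁‖)
  unfold InterpolationIneq at h0s h1s h10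
  simp only [← real_inner_self_eq_norm_sq, inner_add_left, inner_add_right, inner_sub_left,
    inner_sub_right, real_inner_smul_right, inner_zero_left, inner_zero_right, real_inner_comm]
    at h0s h1s h10 hW₁ hW₂ horth
  simp only [real_inner_self_eq_norm_sq] at h0s h1s h10 hW₁ hW₂
  have key : 0 ≤ 2 * L * N * (L - μ) * (N ^ 2 * (f₀ - fs) - D ^ 2 * (f₁ - fs)) := by
    linear_combination (2 * μ * L * N ^ 2 * (1 - ε)) * h0s + (2 * μ * L * N * D * (1 - ε)) * h1s
      + (L * N ^ 2 * D) * h10 + (4 * L * N * D * (L - μ)) * hnoise + (2 * L * (L - μ) * ε) * hcs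
      + (μ * N) * hW₁ + (1 - ε) * hW₂ + (2 * L * N * D ^ 2 * (L - μ)) * horth
  rw [hrate, div_pow, div_mul_eq_mul_div, le_div_iff₀ (by positivity)]
  linarith [(mul_nonneg_iff_of_pos_left (by positivity)).1 key]

section Gradient

variable [CompleteSpace E] {f : E → ℝ} {μ L : ℝ}

theorem DifferentiableAt.hasDerivAt_comp_add_smul {x v : E} {t : ℝ}
    (hf : DifferentiableAt ℝ f (x + t • v)) :
    HasDerivAt (fun s : ℝ => f (x + s • v)) ⟪∇ f (x + t • v), v⟫ t := by
  have hline : HasDerivAt (fun s : ℝ => x + s • v) v t := by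
    simpa using ((hasDerivAt_id t).smul_const v).const_add x
  simpa [Function.comp_def] using hf.hasGradientAt.hasFDerivAt.comp_hasDerivAt t hline

theorem IsLocalMin.gradient_eq_zero {x : E} (h : IsLocalMin f x) : ∇ f x = 0 := by
  simp [gradient, h.fderiv_eq_zero]

theorem IsLocalMin.inner_gradient_eq_zero {x v : E} {t : ℝ}
    (h : IsLocalMin (fun s : ℝ => f (x + s • v)) t) (hf : DifferentiableAt ℝ f (x + t • v)) :
    ⟪∇ f (x + t • v), v⟫ = 0 :=
  h.hasDerivAt_eq_zero hf.hasDerivAt_comp_add_smul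

theorem le_add_inner_gradient_add_sq_of_lipschitz (hf : Differentiable ℝ f)
    (hlip : ∀ x y, ‖∇ f x - ∇ f y‖ ≤ L * ‖x - y‖) (x y : E) :
    f y ≤ f x + ⟪∇ f x, y - x⟫ + L / 2 * ‖y - x‖ ^ 2 := by
  set v := y - x
  set ψ : ℝ → ℝ := fun t => f (x + t • v) - t * ⟪∇ f x, v⟫ - L / 2 * ‖v‖ ^ 2 * t ^ 2
  have hψ : ∀ t : ℝ, HasDerivAt ψ (⟪∇ f (x + t • v) - ∇ f x, v⟫ - L * ‖v‖ ^ 2 * t) t := by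
    intro t
    have := (((hf (x + t • v)).hasDerivAt_comp_add_smul).sub
      ((hasDerivAt_id t).mul_const ⟪∇ f x, v⟫)).sub
      ((hasDerivAt_pow 2 t).const_mul (L / 2 * ‖v‖ ^ 2))
    refine this.congr_deriv ?_
    rw [inner_sub_left]
    ring
  have hψ' : ∀ t ∈ interior (Icc (0 : ℝ) 1), deriv ψ t ≤ 0 := by
    rintro t ht
    rw [interior_Icc] at ht
    rw [(hψ t).deriv, sub_nonpos]
    calc ⟪∇ f (x + t • v) - ∇ f x, v⟫ ≤ ‖∇ f (x + t • v) - ∇ f x‖ * ‖v‖ := real_inner_le_norm _ _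
      _ ≤ L * ‖t • v‖ * ‖v‖ := by
        gcongr
        simpa using hlip (x + t • v) x
      _ = L * ‖v‖ ^ 2 * t := by
        rw [norm_smul, Real.norm_of_nonneg ht.1.le]
        ring
  have hanti : AntitoneOn ψ (Icc 0 1) :=
    antitoneOn_of_deriv_nonpos (convex_Icc 0 1)
      (HasDerivAt.continuousOn fun t _ => hψ t)
      (fun t _ => (hψ t).differentiableAt.differentiableWithinAt) hψ'
  have h01 := hanti (left_mem_Icc.2 zero_le_one) (right_mem_Icc.2 zero_le_one) zero_le_one
  simp only [ψ, v, zero_smul, add_zero, one_smul, add_sub_cancel] at h01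
  linarith

theorem add_inner_gradient_add_sq_le_of_convexOn {x : E} (hf : DifferentiableAt ℝ f x)
    (hconv : ConvexOn ℝ univ fun x => f x - μ / 2 * ‖x‖ ^ 2) (y : E) :
    f x + ⟪∇ f x, y - x⟫ + μ / 2 * ‖y - x‖ ^ 2 ≤ f y := by
  have h := hconv.add_le_of_hasFDerivAt
    (hf.hasGradientAt.hasFDerivAt.sub ((hasStrictFDerivAt_norm_sq x).hasFDerivAt.const_mul _)) y
  have hy : ‖y‖ ^ 2 = ‖x‖ ^ 2 + 2 * ⟪x, y - x⟫ + ‖y - x‖ ^ 2 := by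
    rw [← norm_add_sq_real, add_sub_cancel]
  simp only [sub_apply, smul_apply, InnerProductSpace.toDual_apply_apply, innerSL_apply_apply,
    smul_eq_mul, nsmul_eq_mul] at h
  linear_combination h - μ / 2 * hy

theorem interpolationIneq_of_quadratic_bounds (hμL : μ < L)
    (upper : ∀ x y, f y ≤ f x + ⟪∇ f x, y - x⟫ + L / 2 * ‖y - x‖ ^ 2)
    (lower : ∀ x y, f x + ⟪∇ f x, y - x⟫ + μ / 2 * ‖y - x‖ ^ 2 ≤ f y) (a b : E) :
    InterpolationIneq μ L a (f a) (∇ f a) b (f b) (∇ f b) := by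
  have hLμ : 0 < L - μ := sub_pos.2 hμL
  obtain ⟨s, hs⟩ : ∃ s, s = ∇ f a - ∇ f b + μ • (b - a) := ⟨_, rfl⟩
  set c := (L - μ)⁻¹
  have hc : c * (L - μ) = 1 := inv_mul_cancel₀ hLμ.ne'
  -- Chain the lower bound at `a` and the upper bound at `b` at `b + s / (L - μ)`, the point
  -- where the resulting estimate is sharpest.
  have hchain := (lower a (b + c • s)).trans (upper b (b + c • s))
  rw [show b + c • s - a = (b - a) + c • s by abel, add_sub_cancel_left] at hchain
  have hss : ⟪s, s⟫ = ⟪∇ f a, s⟫ - ⟪∇ f b, s⟫ + μ * ⟪b - a, s⟫ := by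
    nth_rw 1 [hs]
    simp only [inner_add_left, inner_sub_left, real_inner_smul_left]
  rw [InterpolationIneq, show ∇ f b - ∇ f a - μ • (b - a) = -s by rw [hs]; abel, norm_neg]
  simp only [← real_inner_self_eq_norm_sq, inner_add_left, inner_add_right, inner_sub_left,
    inner_sub_right, real_inner_smul_right, real_inner_comm] at hchain hss ⊢
  linear_combination 2 * (L - μ) * hchain + 2 * c * (L - μ) * hss + ⟪s, s⟫ * (c * (L - μ) - 1) * hc

end Gradient

theorem stmt10 {n : ℕ} (μ L ε : ℝ) (hμ : 0 < μ) (hμL : μ < L) (hε0 : 0 ≤ ε) (hε1 : ε < 1)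
    (f : EuclideanSpace ℝ (Fin n) → ℝ) (hf : SmoothStronglyConvex μ L f)
    (xstar : EuclideanSpace ℝ (Fin n)) (hmin : ∀ y, f xstar ≤ f y)
    (x₀ x₁ d₀ : EuclideanSpace ℝ (Fin n)) (γ : ℝ)
    (hd₀ : ‖-gradient f x₀ - d₀‖ ≤ ε * ‖gradient f x₀‖)
    (hγ : ∀ γ' : ℝ, f (x₀ - γ • d₀) ≤ f (x₀ - γ' • d₀))
    (hx₁ : x₁ = x₀ - γ • d₀) :
    f x₁ - f xstar ≤
      ((1 - μ / L * ((1 - ε) / (1 + ε))) / (1 + μ / L * ((1 - ε) / (1 + ε)))) ^ 2 *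
        (f x₀ - f xstar) := by
  obtain ⟨hC1, hconv, hlip⟩ := hf
  have hdiff : Differentiable ℝ f := hC1.differentiable one_ne_zero
  have interp := interpolationIneq_of_quadratic_bounds hμL
    (le_add_inner_gradient_add_sq_of_lipschitz hdiff hlip)
    (fun x => add_inner_gradient_add_sq_le_of_convexOn (hdiff x) hconv)
  have hstar : ∇ f xstar = 0 := IsLocalMin.gradient_eq_zero (.of_forall hmin)
  have horth : ⟪∇ f x₁, d₀⟫ = 0 := by
    have hline : x₀ - γ • d₀ = x₀ + γ • -d₀ := by rw [smul_neg, sub_eq_add_neg]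
    have hmin_line : IsLocalMin (fun t : ℝ => f (x₀ + t • -d₀)) γ :=
      .of_forall fun t => by simpa only [smul_neg, ← sub_eq_add_neg] using hγ t
    simpa only [← hline, ← hx₁, inner_neg_right, neg_eq_zero] using
      hmin_line.inner_gradient_eq_zero (hdiff _)
  have hstep : x₁ - x₀ = -(γ • d₀) := by rw [hx₁, sub_sub_cancel_left]
  exact contraction_of_interpolationIneq hμ hμL hε0 hε1
    (hstar ▸ interp x₀ xstar) (hstar ▸ interp x₁ xstar) (interp x₁ x₀)
    (by rw [hstep, inner_neg_right, inner_smul_right, horth, mul_zero, neg_zero])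
    (inner_le_of_norm_neg_sub_le hd₀ (by rwa [real_inner_comm]))
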